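/- Let N, L, c_sp be positive integers, let P be an L-level sparse block collection with sparsity constant c_sp, and let b ∈ ℝ^N. Let (A_k)_{k≥0}, (Â_k)_{k≥0} be sequences of matrices in ℝ^{N×N} with W_k := A_k − Â_k, let (x_k)_{k≥0} be a sequence in ℝ^N, let (M_k)_{k≥0} be subsets of P, and let 0 < θ < 1. Assume for every k ≥ 0: (i) the update rule (A_{k+1})_{ij} = (Â_k)_{ij} if (i,j) ∈ t×s for some (t,s) ∈ M_k and (A_{k+1})_{ij} = (A_k)_{ij} otherwise; (ii) the Dörfler marking condition Σ_{(t,s)∈M_k} ‖(W_k)_{ts}(x_k)_s‖₂² ≥ θ²·η_k², where η_k² := Σ_{(t,s)∈P} ‖(W_k)_{ts}(x_k)_s‖₂²; (iii) A_k is invertible with ‖A_k^{-1}‖₂ ≤ C for a constant C independent of k; (iv) ‖W_k‖₂ ≤ C' for a constant C' independent of k. Assume moreover δ_k := ‖b − A_k x_k‖₂ → 0, ‖A_{k+1} − A_k‖₂ → 0, and ‖Â_{k+1} − Â_k‖₂ → 0 as k → ∞. Then η_k → 0 as k → ∞. -/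

import Mathlib

open Finset

/-- The Euclidean norm on `ℝ^N`. -/
noncomputable def enorm {N : ℕ} (v : Fin N → ℝ) : ℝ :=
  Real.sqrt (∑ i, v i ^ 2)

/-- `‖M_{ts} x_s‖₂² = Σ_{i∈t} (Σ_{j∈s} M_{ij} x_j)²`. -/
def blockNormSq {N : ℕ} (M : Matrix (Fin N) (Fin N) ℝ)
    (t s : Finset (Fin N)) (x : Fin N → ℝ) : ℝ :=
  ∑ i ∈ t, (∑ j ∈ s, M i j * x j) ^ 2

/-- An `L`-level sparse block collection with sparsity constant `c_sp`: a finite set `P`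
of blocks `(t,s)`, `t,s ⊆ {1,…,N}`, with a level function `lvl : P → {1,…,L}` such that
the product index sets are pairwise disjoint, row (resp. column) clusters of blocks of
the same level are equal or disjoint, and on each level at most `c_sp` blocks share a
given row (resp. column) cluster. -/
structure SparseBlockCollection (N L csp : ℕ) where
  P : Finset (Finset (Fin N) × Finset (Fin N))
  lvl : Finset (Fin N) × Finset (Fin N) → ℕ
  lvl_range : ∀ b ∈ P, 1 ≤ lvl b ∧ lvl b ≤ L
  prod_disjoint : ∀ b ∈ P, ∀ b' ∈ P, b ≠ b' → Disjoint (b.1 ×ˢ b.2) (b'.1 ×ˢ b'.2)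
  rows_eq_or_disjoint : ∀ b ∈ P, ∀ b' ∈ P, lvl b = lvl b' → b.1 = b'.1 ∨ Disjoint b.1 b'.1
  cols_eq_or_disjoint : ∀ b ∈ P, ∀ b' ∈ P, lvl b = lvl b' → b.2 = b'.2 ∨ Disjoint b.2 b'.2
  row_sparsity : ∀ ℓ : ℕ, ∀ t : Finset (Fin N),
    (P.filter (fun b => lvl b = ℓ ∧ b.1 = t)).card ≤ csp
  col_sparsity : ∀ ℓ : ℕ, ∀ s : Finset (Fin N),
    (P.filter (fun b => lvl b = ℓ ∧ b.2 = s)).card ≤ csp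

/-- The spectral (Euclidean operator) norm of a matrix: the supremum of `‖Mx‖₂` over the
unit ball `‖x‖₂ ≤ 1`. -/
noncomputable def specNorm {N : ℕ} (M : Matrix (Fin N) (Fin N) ℝ) : ℝ :=
  sSup {r : ℝ | ∃ x : Fin N → ℝ, _root_.enorm x ≤ 1 ∧ r = _root_.enorm (M.mulVec x)}

/-! On a marked block the update makes `A_{k+1} - A_k` agree with `-W_k`, so Dörfler marking gives
`θ² η_k² ≤ Σ_{(t,s) ∈ M_k} ‖(A_{k+1} - A_k)_{ts} (x_k)_s‖₂² ≤ #P ‖A_{k+1} - A_k‖₂² ‖x_k‖₂²`.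
The iterates stay bounded, `‖x_k‖₂ ≤ ‖A_k⁻¹‖₂ ‖A_k x_k‖₂ ≤ C (‖b‖₂ + δ_k)`, while the increments
tend to zero, hence so does `η_k`. -/

open Filter Topology Matrix

namespace EuclideanNorm

variable {N : ℕ}

theorem enorm_eq_norm_toLp (v : Fin N → ℝ) : _root_.enorm v = ‖WithLp.toLp 2 v‖ := by
  simp [_root_.enorm, EuclideanSpace.norm_eq]

theorem enorm_nonneg (v : Fin N → ℝ) : 0 ≤ _root_.enorm v := Real.sqrt_nonneg _

theorem enorm_sq (v : Fin N → ℝ) : _root_.enorm v ^ 2 = ∑ i, v i ^ 2 :=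
  Real.sq_sqrt (sum_nonneg fun _ _ => sq_nonneg _)

theorem enorm_mulVec_le_norm_toEuclideanCLM (M : Matrix (Fin N) (Fin N) ℝ) (x : Fin N → ℝ) :
    _root_.enorm (M *ᵥ x) ≤ ‖Matrix.toEuclideanCLM (𝕜 := ℝ) M‖ * _root_.enorm x := by
  simpa only [enorm_eq_norm_toLp, Matrix.toEuclideanCLM_toLp] using
    (Matrix.toEuclideanCLM (𝕜 := ℝ) M).le_opNorm (WithLp.toLp 2 x)

theorem norm_toEuclideanCLM_mem_upperBounds (M : Matrix (Fin N) (Fin N) ℝ) :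
    ‖Matrix.toEuclideanCLM (𝕜 := ℝ) M‖ ∈
      upperBounds {r : ℝ | ∃ x : Fin N → ℝ, _root_.enorm x ≤ 1 ∧ r = _root_.enorm (M *ᵥ x)} := by
  rintro _ ⟨x, hx, rfl⟩
  calc _root_.enorm (M *ᵥ x) ≤ ‖Matrix.toEuclideanCLM (𝕜 := ℝ) M‖ * _root_.enorm x :=
        enorm_mulVec_le_norm_toEuclideanCLM M x
    _ ≤ ‖Matrix.toEuclideanCLM (𝕜 := ℝ) M‖ := mul_le_of_le_one_right (norm_nonneg _) hx

theorem bddAbove_specNorm_set (M : Matrix (Fin N) (Fin N) ℝ) :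
    BddAbove {r : ℝ | ∃ x : Fin N → ℝ, _root_.enorm x ≤ 1 ∧ r = _root_.enorm (M *ᵥ x)} :=
  ⟨_, norm_toEuclideanCLM_mem_upperBounds M⟩

theorem specNorm_nonneg (M : Matrix (Fin N) (Fin N) ℝ) : 0 ≤ specNorm M :=
  le_csSup (bddAbove_specNorm_set M) ⟨0, by simp [_root_.enorm], by simp [_root_.enorm]⟩

theorem specNorm_eq_norm_toEuclideanCLM (M : Matrix (Fin N) (Fin N) ℝ) :
    specNorm M = ‖Matrix.toEuclideanCLM (𝕜 := ℝ) M‖ := by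
  refine le_antisymm
    (csSup_le ⟨_, 0, by simp [_root_.enorm], rfl⟩ (norm_toEuclideanCLM_mem_upperBounds M))
    (ContinuousLinearMap.opNorm_le_of_unit_norm (specNorm_nonneg M) fun x hx => ?_)
  have hx' : _root_.enorm x.ofLp ≤ 1 := by simp [enorm_eq_norm_toLp, hx]
  calc ‖Matrix.toEuclideanCLM (𝕜 := ℝ) M x‖ = _root_.enorm (M *ᵥ x.ofLp) := by
        rw [enorm_eq_norm_toLp, ← Matrix.toEuclideanCLM_toLp, WithLp.toLp_ofLp]
    _ ≤ specNorm M := le_csSup (bddAbove_specNorm_set M) ⟨x.ofLp, hx', rfl⟩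

theorem enorm_mulVec_le (M : Matrix (Fin N) (Fin N) ℝ) (x : Fin N → ℝ) :
    _root_.enorm (M *ᵥ x) ≤ specNorm M * _root_.enorm x :=
  specNorm_eq_norm_toEuclideanCLM M ▸ enorm_mulVec_le_norm_toEuclideanCLM M x

theorem enorm_le_enorm_add_enorm_sub (b v : Fin N → ℝ) :
    _root_.enorm v ≤ _root_.enorm b + _root_.enorm (b - v) := by
  simp only [enorm_eq_norm_toLp, WithLp.toLp_sub]
  exact norm_le_insert _ _

theorem enorm_le_specNorm_inv_mul {A : Matrix (Fin N) (Fin N) ℝ} (hA : IsUnit A.det)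
    (x : Fin N → ℝ) : _root_.enorm x ≤ specNorm A⁻¹ * _root_.enorm (A *ᵥ x) := by
  simpa [mulVec_mulVec, nonsing_inv_mul _ hA] using enorm_mulVec_le A⁻¹ (A *ᵥ x)

end EuclideanNorm

namespace BlockNorm

open EuclideanNorm

variable {N : ℕ}

theorem blockNormSq_congr {M M' : Matrix (Fin N) (Fin N) ℝ} {t s : Finset (Fin N)}
    (h : ∀ i ∈ t, ∀ j ∈ s, M i j = M' i j) (x : Fin N → ℝ) :
    blockNormSq M t s x = blockNormSq M' t s x :=
  sum_congr rfl fun i hi => by rw [sum_congr rfl fun j hj => by rw [h i hi j hj]]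

theorem blockNormSq_neg (M : Matrix (Fin N) (Fin N) ℝ) (t s : Finset (Fin N)) (x : Fin N → ℝ) :
    blockNormSq (-M) t s x = blockNormSq M t s x := by
  simp [blockNormSq]

theorem blockNormSq_sub_of_eqOn {A A' Â : Matrix (Fin N) (Fin N) ℝ} {t s : Finset (Fin N)}
    (h : ∀ i ∈ t, ∀ j ∈ s, A' i j = Â i j) (x : Fin N → ℝ) :
    blockNormSq (A' - A) t s x = blockNormSq (A - Â) t s x := by
  rw [← blockNormSq_neg, neg_sub]
  exact blockNormSq_congr (fun i hi j hj => by simp [h i hi j hj]) x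

theorem blockNormSq_le (M : Matrix (Fin N) (Fin N) ℝ) (t s : Finset (Fin N)) (x : Fin N → ℝ) :
    blockNormSq M t s x ≤ (specNorm M * _root_.enorm x) ^ 2 := by
  set y : Fin N → ℝ := fun j => if j ∈ s then x j else 0
  have hrow : ∀ i, ∑ j ∈ s, M i j * x j = (M *ᵥ y) i := fun i => by
    simp [y, mulVec, dotProduct, mul_ite, sum_ite_mem]
  have hy : _root_.enorm y ≤ _root_.enorm x :=
    Real.sqrt_le_sqrt <| sum_le_sum fun j _ => by by_cases hj : j ∈ s <;> simp [y, hj, sq_nonneg]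
  calc blockNormSq M t s x = ∑ i ∈ t, (M *ᵥ y) i ^ 2 := by simp only [blockNormSq, hrow]
    _ ≤ ∑ i, (M *ᵥ y) i ^ 2 := sum_le_sum_of_subset_of_nonneg (subset_univ t) fun _ _ _ => sq_nonneg _
    _ = _root_.enorm (M *ᵥ y) ^ 2 := (enorm_sq _).symm
    _ ≤ (specNorm M * _root_.enorm x) ^ 2 := by
      gcongr
      · exact enorm_nonneg _
      · exact (enorm_mulVec_le M y).trans (by gcongr; exact specNorm_nonneg M)

theorem sum_blockNormSq_le_card_mul {Q P : Finset (Finset (Fin N) × Finset (Fin N))} (hQ : Q ⊆ P)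
    (M : Matrix (Fin N) (Fin N) ℝ) (x : Fin N → ℝ) :
    ∑ p ∈ Q, blockNormSq M p.1 p.2 x ≤ P.card * (specNorm M * _root_.enorm x) ^ 2 :=
  calc ∑ p ∈ Q, blockNormSq M p.1 p.2 x ≤ ∑ _p ∈ Q, (specNorm M * _root_.enorm x) ^ 2 :=
        sum_le_sum fun p _ => blockNormSq_le M p.1 p.2 x
    _ = Q.card * (specNorm M * _root_.enorm x) ^ 2 := by rw [sum_const, nsmul_eq_mul]
    _ ≤ P.card * (specNorm M * _root_.enorm x) ^ 2 := by gcongr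

end BlockNorm

theorem tendsto_zero_of_sq_le {α : Type*} {l : Filter α} {f g : α → ℝ} (hf : ∀ a, 0 ≤ f a)
    (hfg : ∀ a, f a ^ 2 ≤ g a) (hg : Tendsto g l (𝓝 0)) : Tendsto f l (𝓝 0) :=
  squeeze_zero hf (fun a => Real.le_sqrt_of_sq_le (hfg a)) (by simpa using hg.sqrt)

open EuclideanNorm BlockNorm in
theorem estimator_convergence_general
    (N L csp : ℕ)
    (C : SparseBlockCollection N L csp)
    (b : Fin N → ℝ)
    (Ak Ahk : ℕ → Matrix (Fin N) (Fin N) ℝ)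
    (Wk : ℕ → Matrix (Fin N) (Fin N) ℝ) (hW : ∀ k, Wk k = Ak k - Ahk k)
    (xk : ℕ → Fin N → ℝ)
    (Mk : ℕ → Finset (Finset (Fin N) × Finset (Fin N))) (hMk : ∀ k, Mk k ⊆ C.P)
    (θ : ℝ) (hθ0 : 0 < θ)
    (ηk : ℕ → ℝ) (hηk0 : ∀ k, 0 ≤ ηk k)
    (hupdate : ∀ k, ∀ i j : Fin N,
      (if ∃ p ∈ Mk k, i ∈ p.1 ∧ j ∈ p.2 then Ak (k + 1) i j = Ahk k i j
        else Ak (k + 1) i j = Ak k i j))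
    (hmark : ∀ k, θ ^ 2 * ηk k ^ 2 ≤ ∑ p ∈ Mk k, blockNormSq (Wk k) p.1 p.2 (xk k))
    (hinv : ∀ k, IsUnit (Ak k).det)
    (Cbound : ℝ) (hinvbound : ∀ k, specNorm (Ak k)⁻¹ ≤ Cbound)
    (hδ : Tendsto (fun k => _root_.enorm (b - (Ak k).mulVec (xk k))) atTop (nhds 0))
    (hAdiff : Tendsto (fun k => specNorm (Ak (k + 1) - Ak k)) atTop (nhds 0)) :
    Tendsto ηk atTop (nhds 0) := by
  set δ := fun k => _root_.enorm (b - Ak k *ᵥ xk k)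
  have hCbound : 0 ≤ Cbound := (specNorm_nonneg _).trans (hinvbound 0)
  have hxk : ∀ k, _root_.enorm (xk k) ≤ Cbound * (_root_.enorm b + δ k) := fun k =>
    (enorm_le_specNorm_inv_mul (hinv k) _).trans <|
      mul_le_mul (hinvbound k) (enorm_le_enorm_add_enorm_sub _ _) (enorm_nonneg _) hCbound
  have hmarked : ∀ k, ∀ p ∈ Mk k, ∀ i ∈ p.1, ∀ j ∈ p.2, Ak (k + 1) i j = Ahk k i j := by
    intro k p hp i hi j hj
    simpa only [if_pos (⟨p, hp, hi, hj⟩ : ∃ p ∈ Mk k, i ∈ p.1 ∧ j ∈ p.2)] using hupdate k i j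
  have hηk : ∀ k, ηk k ^ 2 ≤ (θ ^ 2)⁻¹ *
      (C.P.card * (specNorm (Ak (k + 1) - Ak k) * (Cbound * (_root_.enorm b + δ k))) ^ 2) := by
    intro k
    rw [le_inv_mul_iff₀ (by positivity)]
    calc θ ^ 2 * ηk k ^ 2 ≤ ∑ p ∈ Mk k, blockNormSq (Wk k) p.1 p.2 (xk k) := hmark k
      _ = ∑ p ∈ Mk k, blockNormSq (Ak (k + 1) - Ak k) p.1 p.2 (xk k) :=
        sum_congr rfl fun p hp => by rw [hW, blockNormSq_sub_of_eqOn (hmarked k p hp)]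
      _ ≤ C.P.card * (specNorm (Ak (k + 1) - Ak k) * _root_.enorm (xk k)) ^ 2 :=
        sum_blockNormSq_le_card_mul (hMk k) _ _
      _ ≤ _ := by
        gcongr
        · exact mul_nonneg (specNorm_nonneg _) (enorm_nonneg _)
        · exact specNorm_nonneg _
        · exact hxk k
  refine tendsto_zero_of_sq_le hηk0 hηk ?_
  simpa using (((hAdiff.mul ((tendsto_const_nhds.add hδ).const_mul Cbound)).pow 2).const_mul
    (C.P.card : ℝ)).const_mul (θ ^ 2)⁻¹

/-- Lemma 3: convergence of the error estimator `η_k` produced by the block-adaptive ACA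
algorithm, under the update rule, the Dörfler marking condition, uniform bounds on
`‖A_k^{-1}‖₂` and `‖W_k‖₂`, and convergence to zero of the residuals `δ_k` and of the
matrix increments. -/
theorem estimator_convergence
    (N L csp : ℕ) (hN : 0 < N) (hL : 0 < L) (hcsp : 0 < csp)
    (C : SparseBlockCollection N L csp)
    (b : Fin N → ℝ)
    (Ak Ahk : ℕ → Matrix (Fin N) (Fin N) ℝ)
    (Wk : ℕ → Matrix (Fin N) (Fin N) ℝ) (hW : ∀ k, Wk k = Ak k - Ahk k)
    (xk : ℕ → Fin N → ℝ)
    (Mk : ℕ → Finset (Finset (Fin N) × Finset (Fin N))) (hMk : ∀ k, Mk k ⊆ C.P)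
    (θ : ℝ) (hθ0 : 0 < θ) (hθ1 : θ < 1)
    (ηk : ℕ → ℝ) (hηk0 : ∀ k, 0 ≤ ηk k)
    (hηk : ∀ k, ηk k ^ 2 = ∑ p ∈ C.P, blockNormSq (Wk k) p.1 p.2 (xk k))
    (hupdate : ∀ k, ∀ i j : Fin N,
      (if ∃ p ∈ Mk k, i ∈ p.1 ∧ j ∈ p.2 then Ak (k + 1) i j = Ahk k i j
        else Ak (k + 1) i j = Ak k i j))
    (hmark : ∀ k, θ ^ 2 * ηk k ^ 2 ≤ ∑ p ∈ Mk k, blockNormSq (Wk k) p.1 p.2 (xk k))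
    (hinv : ∀ k, IsUnit (Ak k).det)
    (Cbound : ℝ) (hinvbound : ∀ k, specNorm (Ak k)⁻¹ ≤ Cbound)
    (Cbound' : ℝ) (hWbound : ∀ k, specNorm (Wk k) ≤ Cbound')
    (hδ : Tendsto (fun k => _root_.enorm (b - (Ak k).mulVec (xk k))) atTop (nhds 0))
    (hAdiff : Tendsto (fun k => specNorm (Ak (k + 1) - Ak k)) atTop (nhds 0))
    (hAhdiff : Tendsto (fun k => specNorm (Ahk (k + 1) - Ahk k)) atTop (nhds 0)) :
    Tendsto ηk atTop (nhds 0) :=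
  estimator_convergence_general N L csp C b Ak Ahk Wk hW xk Mk hMk θ hθ0 ηk hηk0 hupdate hmark hinv
    Cbound hinvbound hδ hAdiff
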